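/- Let n ≥ 1. The function W defined on the real vector space of Hermitian complex n×n matrices by W(f) = −log Re trace(exp(−f)) is concave: for all Hermitian f, g and all t ∈ [0,1], W(t·f + (1−t)·g) ≥ t·W(f) + (1−t)·W(g). -/

import Mathlib

/-!
Write `Z(A) = Re tr exp A`, so that `W(f) = -log Z(-f)`; the claim is that `log Z` is convex on
Hermitian matrices. Let `C = a A + b B` and take an orthonormal eigenbasis `(v_i)` of `C`. With
`x_i = ⟨v_i, A v_i⟩` and `y_i = ⟨v_i, B v_i⟩`, the eigenvalues of `C` are `a x_i + b y_i`, so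
`log Z(C) = log Σ exp (a x_i + b y_i) ≤ a log Σ exp x_i + b log Σ exp y_i` by convexity of
log-sum-exp. Finally `Σ exp x_i ≤ Z(A)` (Peierls): the diagonal of `A` in any orthonormal basis is
obtained from its eigenvalues by a unistochastic, hence doubly stochastic, matrix, and `exp` is
convex.
-/

open Matrix

noncomputable def genFunctional {n : ℕ} (f : Matrix (Fin n) (Fin n) ℂ) : ℝ :=
  -Real.log ((Matrix.trace (NormedSpace.exp (-f))).re)

open Real Finset

noncomputable def logSumExp {ι : Type*} [Fintype ι] (x : ι → ℝ) : ℝ :=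
  log (∑ i, exp (x i))

theorem convexOn_logSumExp {ι : Type*} [Fintype ι] :
    ConvexOn ℝ Set.univ (logSumExp : (ι → ℝ) → ℝ) := by
  refine ⟨convex_univ, fun x _ y _ a b ha hb hab => ?_⟩
  rcases isEmpty_or_nonempty ι with hι | hι
  · simp [logSumExp]
  set X := ∑ i, exp (x i)
  set Y := ∑ i, exp (y i)
  have hX : 0 < X := by positivity
  have hY : 0 < Y := by positivity
  -- Hölder's inequality, in the form of convexity of `exp` applied after normalising by `X^a Y^b`.
  have hterm : ∀ i, exp ((a • x + b • y) i) / exp (a * log X + b * log Y)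
      ≤ a * (exp (x i) / X) + b * (exp (y i) / Y) := fun i =>
    calc exp ((a • x + b • y) i) / exp (a * log X + b * log Y)
        = exp (a * (x i - log X) + b * (y i - log Y)) := by
          rw [← exp_sub]; congr 1; simp only [Pi.add_apply, Pi.smul_apply, smul_eq_mul]; ring
      _ ≤ a * exp (x i - log X) + b * exp (y i - log Y) :=
          convexOn_exp.2 trivial trivial ha hb hab
      _ = a * (exp (x i) / X) + b * (exp (y i) / Y) := by
          rw [exp_sub, exp_sub, exp_log hX, exp_log hY]
  have hsum : ∑ i, exp ((a • x + b • y) i) ≤ exp (a * log X + b * log Y) := by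
    have := sum_le_sum fun i (_ : i ∈ univ) => hterm i
    rw [← sum_div, sum_add_distrib, ← mul_sum, ← mul_sum, ← sum_div, ← sum_div, div_self hX.ne',
      div_self hY.ne', mul_one, mul_one, hab, div_le_one (exp_pos _)] at this
    exact this
  exact (log_le_iff_le_exp (by positivity)).2 hsum

namespace Matrix

variable {n 𝕜 : Type*} [Fintype n] [DecidableEq n] [RCLike 𝕜]

theorem sum_comp_mulVec_le_of_mem_doublyStochastic {M : Matrix n n ℝ}
    (hM : M ∈ doublyStochastic ℝ n) {s : Set ℝ} {φ : ℝ → ℝ} (hφ : ConvexOn ℝ s φ) {x : n → ℝ}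
    (hx : ∀ i, x i ∈ s) : ∑ i, φ ((M *ᵥ x) i) ≤ ∑ i, φ (x i) :=
  calc ∑ i, φ ((M *ᵥ x) i) ≤ ∑ i, (M *ᵥ (φ ∘ x)) i := by
        gcongr with i
        simpa [mulVec, dotProduct] using
          hφ.map_sum_le (fun j _ => hM.1 i j) (sum_row_of_mem_doublyStochastic hM i)
            (fun j _ => hx j)
    _ = ∑ i, φ (x i) := sum_mulVec_of_mem_doublyStochastic hM

theorem of_norm_sq_mem_doublyStochastic {U : Matrix n n 𝕜} (hU : U ∈ unitaryGroup n 𝕜) :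
    (of fun i j => ‖U i j‖ ^ 2) ∈ doublyStochastic ℝ n := by
  refine mem_doublyStochastic_iff_sum.2 ⟨fun i j => sq_nonneg _, fun i => ?_, fun j => ?_⟩
  · have h := congrFun (congrFun (mem_unitaryGroup_iff.1 hU) i) i
    simp only [mul_apply, star_apply, RCLike.star_def, RCLike.mul_conj, one_apply_eq] at h
    exact_mod_cast h
  · have h := congrFun (congrFun (mem_unitaryGroup_iff'.1 hU) j) j
    simp only [mul_apply, star_apply, RCLike.star_def, RCLike.conj_mul, one_apply_eq] at h
    exact_mod_cast h

theorem re_diag_mul_diagonal_mul_star (U : Matrix n n 𝕜) (d : n → ℝ) (i : n) :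
    RCLike.re ((U * diagonal (RCLike.ofReal ∘ d) * star U : Matrix n n 𝕜) i i)
      = ((of fun i j => ‖U i j‖ ^ 2) *ᵥ d) i := by
  rw [mul_apply]
  simp only [mul_diagonal, star_apply, RCLike.star_def, mulVec, dotProduct, of_apply, map_sum,
    Function.comp_apply]
  refine sum_congr rfl fun j _ => ?_
  rw [mul_right_comm, RCLike.mul_conj, ← RCLike.ofReal_pow, ← RCLike.ofReal_mul, RCLike.ofReal_re]

namespace IsHermitian

variable {A : Matrix n n 𝕜}

theorem sum_comp_re_diag_conj_le (hA : A.IsHermitian) {U : Matrix n n 𝕜}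
    (hU : U ∈ unitaryGroup n 𝕜) {s : Set ℝ} {φ : ℝ → ℝ} (hφ : ConvexOn ℝ s φ)
    (hs : ∀ i, hA.eigenvalues i ∈ s) :
    ∑ i, φ (RCLike.re ((star U * A * U) i i)) ≤ ∑ i, φ (hA.eigenvalues i) := by
  set W := star U * (hA.eigenvectorUnitary : Matrix n n 𝕜)
  have hW : W ∈ unitaryGroup n 𝕜 := mul_mem (Unitary.star_mem hU) hA.eigenvectorUnitary.2
  have hconj : star U * A * U = W * diagonal (RCLike.ofReal ∘ hA.eigenvalues) * star W := by
    conv_lhs => rw [hA.spectral_theorem]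
    simp [W, Matrix.mul_assoc]
  simp_rw [hconj, re_diag_mul_diagonal_mul_star]
  exact sum_comp_mulVec_le_of_mem_doublyStochastic (of_norm_sq_mem_doublyStochastic hW) hφ hs

theorem eigenvalues_eq_re_diag (hA : A.IsHermitian) (i : n) :
    hA.eigenvalues i = RCLike.re ((star (hA.eigenvectorUnitary : Matrix n n 𝕜) * A *
      (hA.eigenvectorUnitary : Matrix n n 𝕜)) i i) := by
  have := congrFun (congrFun hA.conjStarAlgAut_star_eigenvectorUnitary i) i
  rw [Unitary.conjStarAlgAut_star_apply] at this
  simp [this]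

theorem exp_eq_cfc (hA : A.IsHermitian) : NormedSpace.exp A = hA.cfc Real.exp := by
  have hexp : NormedSpace.exp (RCLike.ofReal ∘ hA.eigenvalues : n → 𝕜)
      = RCLike.ofReal ∘ Real.exp ∘ hA.eigenvalues := by
    funext i
    simp [Real.exp_eq_exp_ℝ, NormedSpace.map_exp (algebraMap ℝ 𝕜) (continuous_algebraMap ℝ 𝕜)]
  have hconj := exp_units_conj (Unitary.toUnits hA.eigenvectorUnitary)
    (diagonal (RCLike.ofReal ∘ hA.eigenvalues : n → 𝕜))
  simp only [Unitary.val_toUnits_apply, Unitary.val_inv_toUnits_apply,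
    UnitaryGroup.inv_val] at hconj
  conv_lhs => rw [hA.spectral_theorem]
  rw [IsHermitian.cfc, Unitary.conjStarAlgAut_apply, Unitary.conjStarAlgAut_apply, hconj,
    exp_diagonal, hexp]

theorem trace_cfc (hA : A.IsHermitian) (f : ℝ → ℝ) :
    (hA.cfc f).trace = ∑ i, (f (hA.eigenvalues i) : 𝕜) := by
  rw [IsHermitian.cfc, Unitary.conjStarAlgAut_apply, trace_mul_cycle, Unitary.coe_star_mul_self,
    Matrix.one_mul, trace_diagonal]
  rfl

theorem re_trace_exp (hA : A.IsHermitian) :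
    RCLike.re (NormedSpace.exp A).trace = ∑ i, Real.exp (hA.eigenvalues i) := by
  simp [hA.exp_eq_cfc, hA.trace_cfc]

theorem logSumExp_re_diag_conj_le [Nonempty n] (hA : A.IsHermitian) {U : Matrix n n 𝕜}
    (hU : U ∈ unitaryGroup n 𝕜) :
    logSumExp (fun i => RCLike.re ((star U * A * U) i i))
      ≤ log (RCLike.re (NormedSpace.exp A).trace) := by
  rw [hA.re_trace_exp]
  exact log_le_log (by positivity) (hA.sum_comp_re_diag_conj_le hU convexOn_exp fun _ => trivial)

end IsHermitian

theorem convexOn_log_re_trace_exp [Nonempty n] :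
    ConvexOn ℝ {A : Matrix n n 𝕜 | A.IsHermitian}
      fun A => log (RCLike.re (NormedSpace.exp A).trace) := by
  refine ⟨fun A (hA : A.IsHermitian) B (hB : B.IsHermitian) a b _ _ _ =>
    (hA.smul (.all a)).add (hB.smul (.all b)), ?_⟩
  intro A (hA : A.IsHermitian) B (hB : B.IsHermitian) a b ha hb hab
  have hC : (a • A + b • B).IsHermitian := (hA.smul (.all a)).add (hB.smul (.all b))
  set V := hC.eigenvectorUnitary
  set x : n → ℝ := fun i => RCLike.re ((star (V : Matrix n n 𝕜) * A * V) i i)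
  set y : n → ℝ := fun i => RCLike.re ((star (V : Matrix n n 𝕜) * B * V) i i)
  have hxy : hC.eigenvalues = a • x + b • y := by
    funext i
    simp [hC.eigenvalues_eq_re_diag, x, y, V, Matrix.mul_add, Matrix.add_mul, RCLike.smul_re]
  calc log (RCLike.re (NormedSpace.exp (a • A + b • B)).trace) = logSumExp (a • x + b • y) := by
        rw [hC.re_trace_exp, hxy]; rfl
    _ ≤ a • logSumExp x + b • logSumExp y := convexOn_logSumExp.2 trivial trivial ha hb hab
    _ ≤ a • log (RCLike.re (NormedSpace.exp A).trace)
          + b • log (RCLike.re (NormedSpace.exp B).trace) := by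
        simp only [smul_eq_mul]
        gcongr
        exacts [hA.logSumExp_re_diag_conj_le V.2, hB.logSumExp_re_diag_conj_le V.2]

end Matrix

/-- The generating functional `W(f) = -log Re tr(exp(-f))` is concave on the
real vector space of Hermitian matrices: for Hermitian `f, g` and `t ∈ [0,1]`,
`W(t·f + (1-t)·g) ≥ t·W(f) + (1-t)·W(g)`. -/
theorem genFunctional_concave
    {n : ℕ} (hn : 1 ≤ n)
    (f g : Matrix (Fin n) (Fin n) ℂ)
    (hf : f.IsHermitian) (hg : g.IsHermitian)
    (t : ℝ) (ht0 : 0 ≤ t) (ht1 : t ≤ 1) :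
    t * genFunctional f + (1 - t) * genFunctional g
      ≤ genFunctional (t • f + (1 - t) • g) := by
  have : Nonempty (Fin n) := ⟨⟨0, hn⟩⟩
  have key := (convexOn_log_re_trace_exp (n := Fin n) (𝕜 := ℂ)).2 hf.neg hg.neg ht0
    (sub_nonneg.2 ht1) (add_sub_cancel t 1)
  rw [smul_neg, smul_neg, ← neg_add] at key
  simp only [smul_eq_mul, RCLike.re_to_complex] at key
  unfold genFunctional
  linarith
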